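/- arXiv:1703.01544 — 9 statements merged into one kernel-verified Lean document; each statement's English description precedes it below -/
import Mathlib

section
/- Every convex bipartite graph admits a non-jumping labeling. Concretely, if G = (R ∪ B, E) is bipartite and convex over B via a bijection f: B → {1,...,|B|}, then listing first the vertices of R in non-increasing order of s(r) = min{f(b) : b ∈ N(r)} followed by the vertices of B in increasing order of f yields a non-jumping labeling. -/
/-- A labeling `σ : Fin n ≃ V` of the vertices of `G` is *non-jumping* if for all
indices `i < j < k < l`, whenever `(v i, v k)` and `(v j, v l)` are edges,
`(v j, v k)` is also an edge. -/
def NonJumping {V : Type*} {n : ℕ} (G : SimpleGraph V) (σ : Fin n ≃ V) : Prop :=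
  ∀ i j k l : Fin n, i < j → j < k → k < l →
    G.Adj (σ i) (σ k) → G.Adj (σ j) (σ l) → G.Adj (σ j) (σ k)

/-- Every convex bipartite graph admits a non-jumping labeling. Concretely, if
`G` is bipartite with parts `R = Fin r` and `B = Fin m`, convex over `B` (with
the natural order on `Fin m` playing the role of the bijection `f`), and
`s v = min {x : v ~ x}` for `v ∈ R`, then any labeling listing first the
vertices of `R` in non-increasing order of `s` and then the vertices of `B` in
increasing order is non-jumping. -/
theorem convexBipartite_nonJumping {r m : ℕ} (G : SimpleGraph (Fin r ⊕ Fin m))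
    (hbipR : ∀ v w : Fin r, ¬ G.Adj (Sum.inl v) (Sum.inl w))
    (hbipB : ∀ x y : Fin m, ¬ G.Adj (Sum.inr x) (Sum.inr y))
    (hconv : ∀ (v : Fin r) (x y z : Fin m), x ≤ z → z ≤ y →
      G.Adj (Sum.inl v) (Sum.inr x) → G.Adj (Sum.inl v) (Sum.inr y) →
      G.Adj (Sum.inl v) (Sum.inr z))
    (s : Fin r → ℕ)
    (hs1 : ∀ (v : Fin r) (x : Fin m), G.Adj (Sum.inl v) (Sum.inr x) → s v ≤ x.val)
    (hs2 : ∀ (v : Fin r) (x : Fin m), G.Adj (Sum.inl v) (Sum.inr x) →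
      ∃ y : Fin m, G.Adj (Sum.inl v) (Sum.inr y) ∧ s v = y.val)
    (σ : Fin (r + m) ≃ (Fin r ⊕ Fin m))
    (hRfirst : ∀ (i j : Fin (r + m)) (x : Fin m) (v : Fin r), i < j →
      σ i = Sum.inr x → σ j ≠ Sum.inl v)
    (hRord : ∀ (i j : Fin (r + m)) (v w : Fin r), i < j →
      σ i = Sum.inl v → σ j = Sum.inl w → s w ≤ s v)
    (hBord : ∀ (i j : Fin (r + m)) (x y : Fin m), i < j →
      σ i = Sum.inr x → σ j = Sum.inr y → x < y) :
    NonJumping G σ := by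
  intro i j k l hij hjk hkl h1 h2
  cases hsk : σ k with
  | inl w =>
    cases hsi : σ i with
    | inl v => rw [hsi, hsk] at h1; exact absurd h1 (hbipR v w)
    | inr x => exact absurd hsk (hRfirst i k x w (hij.trans hjk) hsi)
  | inr x =>
    cases hsi : σ i with
    | inr y => rw [hsi, hsk] at h1; exact absurd h1 (hbipB y x)
    | inl v =>
      rw [hsi, hsk] at h1
      cases hsj : σ j with
      | inr y =>
        cases hsl : σ l with
        | inl u => exact absurd hsl (hRfirst j l y u (hjk.trans hkl) hsj)
        | inr z => rw [hsj, hsl] at h2; exact absurd h2 (hbipB y z)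
      | inl w =>
        cases hsl : σ l with
        | inl u => rw [hsj, hsl] at h2; exact absurd h2 (hbipR w u)
        | inr z =>
          rw [hsj, hsl] at h2
          have hxz : x < z := hBord k l x z hkl hsk hsl
          obtain ⟨y0, hadj, hswy⟩ := hs2 w z h2
          have h1le : (y0 : ℕ) ≤ x := by
            have := hRord i j v w hij hsi hsj
            have := hs1 v x h1
            omega
          exact hconv w y0 z x h1le hxz.le hadj h2
end

section
/- Let G be a 3-leaf power of a tree T rooted at a non-leaf vertex, where the children of each internal node are ordered so that leaves come before non-leaf children, and let v_1,...,v_n be the leaves of T in DFS order. Then the corresponding vertex labeling of G is non-jumping. -/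
/-- Two leaves of a rooted tree (given by its parent map) are *T3-adjacent* if
they are distinct and are siblings, or one's parent is the other's grandparent
(i.e. one is an uncle of the other). This is the adjacency relation of the
3-leaf power of the tree, restricted to leaves. -/
def T3Adj {α : Type*} (parent : α → α) (a b : α) : Prop :=
  a ≠ b ∧ (parent a = parent b ∨ parent a = parent (parent b) ∨
    parent b = parent (parent a))

/-!
Leaves between two siblings lie in their parent's subtree and, since leaf children come first,
are siblings too. A leaf `v k` cannot be the uncle of an earlier non-sibling `v i`, again because
leaf children come first. So the only real case is `v i` the uncle of `v k`: with
`x = parent (v i)` the grandparent of `v k`, the leaf `v j` lies below `x`; if it is neither a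
child of `x` nor of `parent (v k)`, it lies below a child `z ≠ parent (v k)` of `x`. Then so does
its neighbour `v l`, hence so does `v k`, contradicting the disjointness of the subtrees of
distinct children, which holds as the parent map has no cycles besides the root.
-/

open Function

section

variable {α : Type*}

def IsAncestor (parent : α → α) (x a : α) : Prop :=
  ∃ t : ℕ, parent^[t] a = x

namespace IsAncestor

variable {parent : α → α} {x y z a : α}

theorem parent_self (parent : α → α) (a : α) : IsAncestor parent (parent a) a := ⟨1, rfl⟩

theorem trans (hxy : IsAncestor parent x y) (hya : IsAncestor parent y a) :
    IsAncestor parent x a := by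
  obtain ⟨s, rfl⟩ := hxy
  obtain ⟨t, rfl⟩ := hya
  exact ⟨s + t, iterate_add_apply parent s t a⟩

theorem of_parent (h : IsAncestor parent x (parent a)) : IsAncestor parent x a :=
  h.trans (parent_self parent a)

theorem parent_of_ne (h : IsAncestor parent x a) (hne : x ≠ a) :
    IsAncestor parent x (parent a) := by
  obtain ⟨_ | t, rfl⟩ := h
  · exact absurd rfl hne
  · exact ⟨t, (iterate_succ_apply parent t a).symm⟩

theorem total (hy : IsAncestor parent y a) (hz : IsAncestor parent z a) :
    IsAncestor parent y z ∨ IsAncestor parent z y := by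
  obtain ⟨s, rfl⟩ := hy
  obtain ⟨t, rfl⟩ := hz
  rcases le_total t s with hts | hst
  · refine .inl ⟨s - t, ?_⟩
    rw [← iterate_add_apply, Nat.sub_add_cancel hts]
  · refine .inr ⟨t - s, ?_⟩
    rw [← iterate_add_apply, Nat.sub_add_cancel hst]

theorem exists_child (h : IsAncestor parent x a) (hne : a ≠ x) :
    ∃ z, parent z = x ∧ z ≠ x ∧ IsAncestor parent z a := by
  obtain ⟨t, ht⟩ := h
  induction t with
  | zero => exact absurd ht hne
  | succ s ih =>
    by_cases hs : parent^[s] a = x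
    · exact ih hs
    · exact ⟨_, (iterate_succ_apply' parent s a).symm.trans ht, hs, s, rfl⟩

end IsAncestor

section Acyclic

variable {parent : α → α}

theorem isFixedPt_of_isPeriodicPt_of_depth {root : α} {d : α → ℕ} (hroot : parent root = root)
    (hd : ∀ x, x ≠ root → d (parent x) < d x) {u : α} {m : ℕ} (hm : 0 < m)
    (hu : IsPeriodicPt parent m u) : IsFixedPt parent u := by
  have hle : ∀ x, d (parent x) ≤ d x := fun x => by
    by_cases hx : x = root
    · rw [hx, hroot]
    · exact (hd x hx).le
  have hle_iter : ∀ t x, d (parent^[t] x) ≤ d x := fun t => by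
    induction t with
    | zero => exact fun _ => le_rfl
    | succ t ih => exact fun x => (ih (parent x)).trans (hle x)
  by_contra hfix
  have hu_root : u ≠ root := fun h => hfix (h ▸ hroot)
  obtain ⟨m, rfl⟩ : ∃ m', m = m' + 1 := ⟨m - 1, by omega⟩
  have hlt : d (parent^[m + 1] u) < d u :=
    (hle_iter m (parent u)).trans_lt (hd u hu_root)
  rw [hu.eq] at hlt
  exact lt_irrefl _ hlt

theorem eq_of_isAncestor_of_parent_eq
    (hper : ∀ u m, 0 < m → IsPeriodicPt parent m u → IsFixedPt parent u) {y z : α}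
    (h : IsAncestor parent y z) (hpar : parent z = parent y) (hy : ¬IsFixedPt parent y) :
    y = z := by
  obtain ⟨_ | m, rfl⟩ := h
  · rfl
  · refine absurd (hper _ (m + 1) m.succ_pos ?_) hy
    rw [IsPeriodicPt, IsFixedPt, iterate_succ_apply, ← hpar, ← iterate_succ_apply]

theorem eq_of_isAncestor_of_isAncestor_of_parent_eq
    (hper : ∀ u m, 0 < m → IsPeriodicPt parent m u → IsFixedPt parent u) {y z a : α}
    (hy : IsAncestor parent y a) (hz : IsAncestor parent z a) (hpar : parent y = parent z)
    (hy_fix : ¬IsFixedPt parent y) (hz_fix : ¬IsFixedPt parent z) : y = z := by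
  rcases hy.total hz with hyz | hzy
  · exact eq_of_isAncestor_of_parent_eq hper hyz hpar.symm hy_fix
  · exact (eq_of_isAncestor_of_parent_eq hper hzy hpar hz_fix).symm

end Acyclic

structure IsLeafFirstDFSOrder {n : ℕ} (parent : α → α) (v : Fin n → α) : Prop where
  not_parent : ∀ (i : Fin n) (y : α), parent y ≠ v i
  subtree_interval : ∀ (x : α) (i j k : Fin n), i ≤ j → j ≤ k →
    IsAncestor parent x (v i) → IsAncestor parent x (v k) → IsAncestor parent x (v j)
  leaf_child_first : ∀ (x : α) (i j : Fin n), parent (v i) = x →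
    IsAncestor parent x (v j) → parent (v j) ≠ x → i < j

namespace IsLeafFirstDFSOrder

variable {n : ℕ} {parent : α → α} {v : Fin n → α} {x z : α} {i j k l : Fin n}

theorem parent_eq_of_le_of_le (hv : IsLeafFirstDFSOrder parent v) (hij : i ≤ j) (hjk : j ≤ k)
    (hi : parent (v i) = x) (hk : parent (v k) = x) : parent (v j) = x := by
  by_contra hj
  have hxj := hv.subtree_interval x i j k hij hjk (hi ▸ .parent_self _ _) (hk ▸ .parent_self _ _)
  exact (hv.leaf_child_first x k j hk hxj hj).not_ge hjk

theorem isAncestor_of_t3Adj (hv : IsLeafFirstDFSOrder parent v) (hzj : IsAncestor parent z (v j))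
    (hzj_ne : z ≠ v j) (hpz : parent z = x) (hxk : IsAncestor parent x (v k))
    (hpk : parent (v k) ≠ x) (hkl : k < l) (hjl : T3Adj parent (v j) (v l)) :
    IsAncestor parent z (v l) := by
  have hzpj := hzj.parent_of_ne hzj_ne
  obtain ⟨-, hsib | hjl_uncle | hlj_uncle⟩ := hjl
  · exact hzpj.trans (hsib ▸ .parent_self _ _)
  · exact hzpj.trans (hjl_uncle ▸ (IsAncestor.parent_self _ _).of_parent)
  · by_cases hz : z = parent (v j)
    · have hlx : parent (v l) = x := by rw [hlj_uncle, ← hz, hpz]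
      exact absurd (hv.leaf_child_first x l k hlx hxk hpk) hkl.not_gt
    · exact (hzpj.parent_of_ne hz).trans (hlj_uncle ▸ .parent_self _ _)

theorem parent_eq_or_of_uncle (hv : IsLeafFirstDFSOrder parent v)
    (hper : ∀ u m, 0 < m → IsPeriodicPt parent m u → IsFixedPt parent u)
    (hij : i < j) (hjk : j < k) (hkl : k < l) (hik : parent (v i) = parent (parent (v k)))
    (hjl : T3Adj parent (v j) (v l)) :
    parent (v j) = parent (v k) ∨ parent (v j) = parent (parent (v k)) := by
  by_cases hki : parent (v k) = parent (v i)
  · exact .inl (hv.parent_eq_of_le_of_le hij.le hjk.le hki.symm rfl)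
  have hxk : IsAncestor parent (parent (v i)) (v k) :=
    hik ▸ (IsAncestor.parent_self _ _).of_parent
  have hxj := hv.subtree_interval _ i j k hij.le hjk.le (.parent_self _ _) hxk
  by_contra! hj
  obtain ⟨z, hpz, hzx, hzj⟩ := hxj.exists_child (hv.not_parent j (v i)).symm
  have hzl := hv.isAncestor_of_t3Adj hzj (fun h => hj.2 (by rw [← hik, ← hpz, h])) hpz hxk
    hki hkl hjl
  have hzk := hv.subtree_interval z j k l hjk.le hkl.le hzj hzl
  have hyz : parent (v k) = z :=
    eq_of_isAncestor_of_isAncestor_of_parent_eq hper (.parent_self _ _) hzk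
      (by rw [hpz, hik]) (fun h => hki (h.eq.symm.trans hik.symm))
      (fun h => hzx (h.symm.trans hpz))
  exact (hv.leaf_child_first _ k j rfl (hyz ▸ hzj) hj.1).not_gt hjk

end IsLeafFirstDFSOrder

end

theorem threeLeafPower_nonJumping_general {α : Type*} {n : ℕ}
    (parent : α → α) (root : α) (d : α → ℕ)
    (hroot : parent root = root)
    (hd : ∀ x, x ≠ root → d (parent x) < d x)
    (v : Fin n → α) (hinj : Function.Injective v)
    (hleaf : ∀ (i : Fin n) (y : α), parent y ≠ v i)
    (hsubtree : ∀ (x : α) (i j k : Fin n), i ≤ j → j ≤ k →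
      (∃ t : ℕ, parent^[t] (v i) = x) → (∃ t : ℕ, parent^[t] (v k) = x) →
      ∃ t : ℕ, parent^[t] (v j) = x)
    (hleafFirst : ∀ (x : α) (i j : Fin n), parent (v i) = x →
      (∃ t : ℕ, parent^[t] (v j) = x) → parent (v j) ≠ x → i < j)
    (G : SimpleGraph (Fin n))
    (hAdj : ∀ i j : Fin n, G.Adj i j ↔ T3Adj parent (v i) (v j)) :
    NonJumping G (Equiv.refl (Fin n)) := by
  have hv : IsLeafFirstDFSOrder parent v := ⟨hleaf, hsubtree, hleafFirst⟩
  have hper := fun u m => isFixedPt_of_isPeriodicPt_of_depth (u := u) (m := m) hroot hd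
  intro i j k l hij hjk hkl hik hjl
  simp only [Equiv.refl_apply, hAdj] at hik hjl ⊢
  refine ⟨hinj.ne hjk.ne, ?_⟩
  obtain ⟨-, hsib | hik_uncle | hki_uncle⟩ := hik
  · exact .inl (hv.parent_eq_of_le_of_le hij.le hjk.le hsib rfl)
  · exact (hv.parent_eq_or_of_uncle hper hij hjk hkl hik_uncle hjl).imp_right .inl
  · by_cases hsib : parent (v i) = parent (v k)
    · exact .inl (hv.parent_eq_of_le_of_le hij.le hjk.le hsib rfl)
    · have hki : IsAncestor parent (parent (v k)) (v i) :=
        hki_uncle ▸ (IsAncestor.parent_self _ _).of_parent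
      exact absurd (hv.leaf_child_first _ k i rfl hki hsib) (hij.trans hjk).not_gt

/-- Let `G` be a 3-leaf power of a finite tree `T` rooted at a non-leaf vertex,
and let `v 0, …, v (n-1)` be the leaves of `T` listed in a DFS order in which at
each internal node the leaf children are visited before the non-leaf children
(so leaf children of a node precede all deeper leaves in its subtree, and each
subtree occupies a consecutive interval of leaves). Then the corresponding
labeling of `G` is non-jumping. -/
theorem threeLeafPower_nonJumping {α : Type*} {n : ℕ}
    (parent : α → α) (root : α) (d : α → ℕ)
    (hroot : parent root = root)
    (hd : ∀ x, x ≠ root → d (parent x) < d x)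
    (hrootNonleaf : ∃ y, y ≠ root ∧ parent y = root)
    (v : Fin n → α) (hinj : Function.Injective v)
    (hleaf : ∀ (i : Fin n) (y : α), parent y ≠ v i)
    (hleavesAll : ∀ x : α, (∀ y : α, parent y ≠ x) → ∃ i : Fin n, v i = x)
    (hsubtree : ∀ (x : α) (i j k : Fin n), i ≤ j → j ≤ k →
      (∃ t : ℕ, parent^[t] (v i) = x) → (∃ t : ℕ, parent^[t] (v k) = x) →
      ∃ t : ℕ, parent^[t] (v j) = x)
    (hleafFirst : ∀ (x : α) (i j : Fin n), parent (v i) = x →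
      (∃ t : ℕ, parent^[t] (v j) = x) → parent (v j) ≠ x → i < j)
    (G : SimpleGraph (Fin n))
    (hAdj : ∀ i j : Fin n, G.Adj i j ↔ T3Adj parent (v i) (v j)) :
    NonJumping G (Equiv.refl (Fin n)) :=
  threeLeafPower_nonJumping_general parent root d hroot hd v hinj hleaf hsubtree hleafFirst G hAdj
end

section
/- If a graph G admits a non-jumping labeling, then G admits a monotone L-embedding: one can assign to each vertex v_j an L-shape with corner at (2j, 2j), horizontal arm length v_j.w and vertical arm length v_j.h (as defined in the construction: v_j.h = 2(j-a)+1 where a is the least index with a<j and (v_a,v_j) ∈ E, else 1; v_j.w = 2(b-j)+1 where b is the greatest index with b>j and (v_j,v_b) ∈ E, else 1) such that two L-shapes intersect if and only if the corresponding vertices are adjacent. -/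
/-- If the identity labeling of `G` on `Fin n` is non-jumping, then the
construction placing the corner of the `L`-shape of vertex `j` at `(2j, 2j)` on
the line `y = x`, with horizontal arm length `w j = 2(b - j) + 1` (where `b` is
the greatest index `b > j` with `(v j, v b) ∈ E`, else `w j = 1`) and vertical
arm length `h j = 2(j - a) + 1` (where `a` is the least index `a < j` with
`(v a, v j) ∈ E`, else `h j = 1`), yields a monotone `L`-embedding: two
`L`-shapes intersect, i.e. `x b - x a < w a` and `y b - y a < h b` for `a < b`,
if and only if the corresponding vertices are adjacent. -/
theorem nonJumping_to_monotoneLEmbedding {n : ℕ} (G : SimpleGraph (Fin n))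
    (hnj : ∀ i j k l : Fin n, i < j → j < k → k < l →
      G.Adj i k → G.Adj j l → G.Adj j k)
    (w h : Fin n → ℕ)
    (hw1 : ∀ j b : Fin n, j < b → G.Adj j b → (∀ k : Fin n, j < k → G.Adj j k → k ≤ b) →
      w j = 2 * (b.val - j.val) + 1)
    (hw2 : ∀ j : Fin n, (∀ k : Fin n, j < k → ¬ G.Adj j k) → w j = 1)
    (hh1 : ∀ j a : Fin n, a < j → G.Adj a j → (∀ i : Fin n, i < j → G.Adj i j → a ≤ i) →
      h j = 2 * (j.val - a.val) + 1)
    (hh2 : ∀ j : Fin n, (∀ i : Fin n, i < j → ¬ G.Adj i j) → h j = 1) :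
    ∀ a b : Fin n, a < b →
      (G.Adj a b ↔ (2 * (b.val - a.val) < w a ∧ 2 * (b.val - a.val) < h b)) := by
  classical
  intro a b hab
  -- the set of later neighbors of `a`
  set S : Finset (Fin n) := Finset.univ.filter (fun k => a < k ∧ G.Adj a k) with hS
  -- the set of earlier neighbors of `b`
  set T : Finset (Fin n) := Finset.univ.filter (fun i => i < b ∧ G.Adj i b) with hT
  constructor
  · intro hadj
    have hbS : b ∈ S := by simp [hS, hab, hadj]
    have haT : a ∈ T := by simp [hT, hab, hadj]
    have hSne : S.Nonempty := ⟨b, hbS⟩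
    have hTne : T.Nonempty := ⟨a, haT⟩
    obtain ⟨b', hb'S, hb'max⟩ := S.exists_max_image id hSne
    obtain ⟨a', ha'T, ha'min⟩ := T.exists_min_image id hTne
    simp only [hS, Finset.mem_filter] at hb'S
    simp only [hT, Finset.mem_filter] at ha'T
    have hwa : w a = 2 * (b'.val - a.val) + 1 := by
      refine hw1 a b' hb'S.2.1 hb'S.2.2 ?_
      intro k hk hkadj
      exact hb'max k (by simp [hS, hk, hkadj])
    have hhb : h b = 2 * (b.val - a'.val) + 1 := by
      refine hh1 b a' ha'T.2.1 ha'T.2.2 ?_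
      intro i hi hiadj
      exact ha'min i (by simp [hT, hi, hiadj])
    have h1 : b ≤ b' := hb'max b hbS
    have h2 : a' ≤ a := ha'min a haT
    have hab' : a.val < b.val := hab
    have h1' : b.val ≤ b'.val := h1
    have h2' : a'.val ≤ a.val := h2
    constructor
    · rw [hwa]; omega
    · rw [hhb]; omega
  · rintro ⟨hwlt, hhlt⟩
    have hab' : a.val < b.val := hab
    -- a must have a later neighbor
    have hSne : S.Nonempty := by
      by_contra hne
      have : ∀ k : Fin n, a < k → ¬ G.Adj a k := by
        intro k hk hadj
        exact hne ⟨k, by simp [hS, hk, hadj]⟩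
      have := hw2 a this
      omega
    have hTne : T.Nonempty := by
      by_contra hne
      have : ∀ i : Fin n, i < b → ¬ G.Adj i b := by
        intro i hi hadj
        exact hne ⟨i, by simp [hT, hi, hadj]⟩
      have := hh2 b this
      omega
    obtain ⟨b', hb'S, hb'max⟩ := S.exists_max_image id hSne
    obtain ⟨a', ha'T, ha'min⟩ := T.exists_min_image id hTne
    simp only [hS, Finset.mem_filter] at hb'S
    simp only [hT, Finset.mem_filter] at ha'T
    have hwa : w a = 2 * (b'.val - a.val) + 1 := by
      refine hw1 a b' hb'S.2.1 hb'S.2.2 ?_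
      intro k hk hkadj
      exact hb'max k (by simp [hS, hk, hkadj])
    have hhb : h b = 2 * (b.val - a'.val) + 1 := by
      refine hh1 b a' ha'T.2.1 ha'T.2.2 ?_
      intro i hi hiadj
      exact ha'min i (by simp [hT, hi, hiadj])
    have hab'lt : a.val < b'.val := hb'S.2.1
    have ha'lt : a'.val < b.val := ha'T.2.1
    -- from the inequalities, b ≤ b' and a' ≤ a
    have hbb' : b.val ≤ b'.val := by omega
    have ha'a : a'.val ≤ a.val := by omega
    rcases eq_or_lt_of_le hbb' with heq | hlt
    · have : b = b' := Fin.ext heq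
      exact this ▸ hb'S.2.2
    · rcases eq_or_lt_of_le ha'a with heq2 | hlt2
      · have : a' = a := Fin.ext heq2
        exact this ▸ ha'T.2.2
      · exact hnj a' a b b' (Fin.lt_def.mpr hlt2) hab (Fin.lt_def.mpr hlt)
          ha'T.2.2 hb'S.2.2
end

section
/- Suppose a graph G on vertices v_1,...,v_n has an assignment of real numbers x_1 < x_2 < ... < x_n (corner coordinates on a line of positive slope, with y_j = x_j), widths w_j > 0 and heights h_j > 0, such that vertices v_a, v_b with a < b are adjacent iff (x_b - x_a < w_a and y_b - y_a < h_b). Then the labeling v_1,...,v_n is non-jumping: for all i<j<k<l, if (v_i,v_k) and (v_j,v_l) are edges, then (v_j,v_k) is an edge. -/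
/-- If `G` has a monotone `L`-embedding with corners `(x j, x j)` on a
positively-sloped line (`x` strictly increasing), widths `w j > 0` and heights
`h j > 0`, such that vertices `a < b` are adjacent iff `x b - x a < w a` and
`x b - x a < h b`, then the labeling `v 0, …, v (n-1)` is non-jumping. -/
theorem monotoneLEmbedding_nonJumping {n : ℕ} (G : SimpleGraph (Fin n))
    (x w h : Fin n → ℝ) (hx : StrictMono x)
    (hw : ∀ j, 0 < w j) (hh : ∀ j, 0 < h j)
    (hadj : ∀ a b : Fin n, a < b →
      (G.Adj a b ↔ x b - x a < w a ∧ x b - x a < h b)) :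
    ∀ i j k l : Fin n, i < j → j < k → k < l →
      G.Adj i k → G.Adj j l → G.Adj j k := by
  intro i j k l hij hjk hkl hik hjl
  rw [hadj i k (hij.trans hjk)] at hik
  rw [hadj j l (hjk.trans hkl)] at hjl
  rw [hadj j k hjk]
  constructor
  · have := hx hkl
    linarith [hjl.1]
  · have := hx hij
    linarith [hik.2]
end

section
/- A graph admits a monotone L-embedding (an assignment as in the adjacency characterization with corners on a positively-sloped line) if and only if it admits a non-jumping labeling. -/
/-- A graph on `Fin n` admits a *monotone L-embedding* if for some ordering
`σ` of its vertices there are corner coordinates `x 0 < x 1 < … < x (n-1)` on a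
positively-sloped line, widths `w j > 0` and heights `h j > 0`, such that for
`a < b` the vertices `σ a` and `σ b` are adjacent iff `x b - x a < w a` and
`x b - x a < h b`. -/
def HasMonotoneLEmbedding {n : ℕ} (G : SimpleGraph (Fin n)) : Prop :=
  ∃ (σ : Equiv.Perm (Fin n)) (x w h : Fin n → ℝ),
    StrictMono x ∧ (∀ j, 0 < w j) ∧ (∀ j, 0 < h j) ∧
    ∀ a b : Fin n, a < b →
      (G.Adj (σ a) (σ b) ↔ x b - x a < w a ∧ x b - x a < h b)

/-- A graph admits a monotone `L`-embedding if and only if it admits a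
non-jumping labeling. -/
theorem monotoneLEmbedding_iff_nonJumping {n : ℕ} (G : SimpleGraph (Fin n)) :
    HasMonotoneLEmbedding G ↔ ∃ σ : Equiv.Perm (Fin n), NonJumping G σ := by
  constructor
  · rintro ⟨σ, x, w, h, hx, hw, hh, hiff⟩
    refine ⟨σ, fun i j k l hij hjk hkl hik hjl => ?_⟩
    have h1 := (hiff i k (hij.trans hjk)).mp hik
    have h2 := (hiff j l (hjk.trans hkl)).mp hjl
    have hxij := hx hij
    have hxkl := hx hkl
    exact (hiff j k hjk).mpr ⟨by linarith [h2.1], by linarith [h1.2]⟩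
  · rintro ⟨σ, hnj⟩
    classical
    let S : Fin n → Finset (Fin n) := fun a =>
      insert a (Finset.univ.filter (fun b => a < b ∧ G.Adj (σ a) (σ b)))
    let T : Fin n → Finset (Fin n) := fun b =>
      insert b (Finset.univ.filter (fun a => a < b ∧ G.Adj (σ a) (σ b)))
    have hS : ∀ a, (S a).Nonempty := fun a => ⟨a, Finset.mem_insert_self _ _⟩
    have hT : ∀ b, (T b).Nonempty := fun b => ⟨b, Finset.mem_insert_self _ _⟩
    let M : Fin n → Fin n := fun a => (S a).max' (hS a)
    let m : Fin n → Fin n := fun b => (T b).min' (hT b)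
    have haM : ∀ a, a ≤ M a := fun a => Finset.le_max' _ _ (Finset.mem_insert_self _ _)
    have hmb : ∀ b, m b ≤ b := fun b => Finset.min'_le _ _ (Finset.mem_insert_self _ _)
    have hMmem : ∀ a, M a = a ∨ (a < M a ∧ G.Adj (σ a) (σ (M a))) := by
      intro a
      have h0 : M a ∈ S a := (S a).max'_mem (hS a)
      rcases Finset.mem_insert.mp h0 with h | h
      · exact Or.inl h
      · exact Or.inr (Finset.mem_filter.mp h).2
    have hmmem : ∀ b, m b = b ∨ (m b < b ∧ G.Adj (σ (m b)) (σ b)) := by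
      intro b
      have h0 : m b ∈ T b := (T b).min'_mem (hT b)
      rcases Finset.mem_insert.mp h0 with h | h
      · exact Or.inl h
      · exact Or.inr (Finset.mem_filter.mp h).2
    refine ⟨σ, fun a => (a.val : ℝ),
      fun a => (((M a).val : ℝ) - a.val + 1/2),
      fun b => ((b.val : ℝ) - ((m b).val : ℝ) + 1/2), ?_, ?_, ?_, ?_⟩
    · intro a b hab
      show (a.val : ℝ) < (b.val : ℝ)
      exact_mod_cast hab
    · intro a
      show (0:ℝ) < ((M a).val : ℝ) - a.val + 1/2
      have : (a.val : ℝ) ≤ ((M a).val : ℝ) := by exact_mod_cast haM a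
      linarith
    · intro b
      show (0:ℝ) < (b.val : ℝ) - ((m b).val : ℝ) + 1/2
      have : ((m b).val : ℝ) ≤ (b.val : ℝ) := by exact_mod_cast hmb b
      linarith
    · intro a b hab
      show G.Adj (σ a) (σ b) ↔
        (b.val : ℝ) - a.val < ((M a).val : ℝ) - a.val + 1/2 ∧
        (b.val : ℝ) - a.val < (b.val : ℝ) - ((m b).val : ℝ) + 1/2
      constructor
      · intro hadj
        have hbS : b ∈ S a :=
          Finset.mem_insert_of_mem (Finset.mem_filter.mpr ⟨Finset.mem_univ _, hab, hadj⟩)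
        have haT : a ∈ T b :=
          Finset.mem_insert_of_mem (Finset.mem_filter.mpr ⟨Finset.mem_univ _, hab, hadj⟩)
        have h1 : (b.val : ℝ) ≤ ((M a).val : ℝ) := by exact_mod_cast Finset.le_max' _ _ hbS
        have h2 : ((m b).val : ℝ) ≤ (a.val : ℝ) := by exact_mod_cast Finset.min'_le _ _ haT
        constructor <;> linarith
      · rintro ⟨h1, h2⟩
        have hbM : b.val ≤ (M a).val := by
          have h3 : (b.val : ℝ) < ((M a).val : ℝ) + 1 := by linarith
          have h4 : b.val < (M a).val + 1 := by exact_mod_cast h3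
          omega
        have hma : (m b).val ≤ a.val := by
          have h3 : ((m b).val : ℝ) < (a.val : ℝ) + 1 := by linarith
          have h4 : (m b).val < a.val + 1 := by exact_mod_cast h3
          omega
        have hbM' : b ≤ M a := hbM
        have hma' : m b ≤ a := hma
        rcases hMmem a with hMa | ⟨haMlt, hadjM⟩
        · rw [hMa] at hbM'
          exact absurd hab (not_lt.mpr hbM')
        rcases hmmem b with hmb' | ⟨hmblt, hadjm⟩
        · rw [hmb'] at hma'
          exact absurd hab (not_lt.mpr hma')
        rcases eq_or_lt_of_le hbM' with hbMeq | hbMlt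
        · rw [← hbMeq] at hadjM
          exact hadjM
        rcases eq_or_lt_of_le hma' with hmaeq | hmalt
        · rw [← hmaeq]
          exact hadjm
        · exact hnj (m b) a b (M a) hmalt hab hbMlt hadjm hadjM
end

section
/- Let G be a graph on vertices v_1,...,n indexed 1,...,n with a non-jumping labeling given by the identity order. Then in the constructed monotone L-embedding (corners at (2j,2j), arm lengths as defined), non-adjacent vertices have non-intersecting L-shapes: if (v_j,v_k) ∉ E with j<k, then either 2(k-j) ≥ w_j or 2(k-j) ≥ h_k. -/
/-- In the monotone `L`-embedding constructed from a non-jumping (identity)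
labeling — corners at `(2j, 2j)`, arm lengths `w` and `h` as defined — the
`L`-shapes of non-adjacent vertices do not intersect: if `(v j, v k) ∉ E` with
`j < k`, then it is not the case that both `2(k - j) < w j` and
`2(k - j) < h k`. -/
theorem nonadjacent_no_intersection {n : ℕ} (G : SimpleGraph (Fin n))
    (hnj : ∀ i j k l : Fin n, i < j → j < k → k < l →
      G.Adj i k → G.Adj j l → G.Adj j k)
    (w h : Fin n → ℕ)
    (hw1 : ∀ j b : Fin n, j < b → G.Adj j b → (∀ k : Fin n, j < k → G.Adj j k → k ≤ b) →
      w j = 2 * (b.val - j.val) + 1)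
    (hw2 : ∀ j : Fin n, (∀ k : Fin n, j < k → ¬ G.Adj j k) → w j = 1)
    (hh1 : ∀ j a : Fin n, a < j → G.Adj a j → (∀ i : Fin n, i < j → G.Adj i j → a ≤ i) →
      h j = 2 * (j.val - a.val) + 1)
    (hh2 : ∀ j : Fin n, (∀ i : Fin n, i < j → ¬ G.Adj i j) → h j = 1) :
    ∀ j k : Fin n, j < k → ¬ G.Adj j k →
      ¬ (2 * (k.val - j.val) < w j ∧ 2 * (k.val - j.val) < h k) := by
  classical
  intro j k hjk hnadj ⟨hwj, hhk⟩
  have hjkv : j.val < k.val := hjk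
  have hkj1 : 1 ≤ 2 * (k.val - j.val) := by omega
  -- j has a neighbor above it
  have hex1 : ∃ b : Fin n, j < b ∧ G.Adj j b := by
    by_contra hc
    push_neg at hc
    have := hw2 j (fun b hb hadj => hc b hb hadj)
    omega
  -- k has a neighbor below it
  have hex2 : ∃ a : Fin n, a < k ∧ G.Adj a k := by
    by_contra hc
    push_neg at hc
    have := hh2 k (fun a ha hadj => hc a ha hadj)
    omega
  -- take maximal such b
  let S : Finset (Fin n) := Finset.univ.filter (fun b => j < b ∧ G.Adj j b)
  have hSne : S.Nonempty := by
    obtain ⟨b, hb1, hb2⟩ := hex1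
    exact ⟨b, by simp [S, hb1, hb2]⟩
  set b := S.max' hSne with hbdef
  have hbS : b ∈ S := S.max'_mem hSne
  have hbS' : j < b ∧ G.Adj j b := by simpa [S] using hbS
  have hbmax : ∀ x : Fin n, j < x → G.Adj j x → x ≤ b := by
    intro x hx1 hx2
    exact S.le_max' x (by simp [S, hx1, hx2])
  have hwjval := hw1 j b hbS'.1 hbS'.2 hbmax
  -- take minimal such a
  let T : Finset (Fin n) := Finset.univ.filter (fun a => a < k ∧ G.Adj a k)
  have hTne : T.Nonempty := by
    obtain ⟨a, ha1, ha2⟩ := hex2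
    exact ⟨a, by simp [T, ha1, ha2]⟩
  set a := T.min' hTne with hadef
  have haT : a ∈ T := T.min'_mem hTne
  have haT' : a < k ∧ G.Adj a k := by simpa [T] using haT
  have hamin : ∀ x : Fin n, x < k → G.Adj x k → a ≤ x := by
    intro x hx1 hx2
    exact T.min'_le x (by simp [T, hx1, hx2])
  have hhkval := hh1 k a haT'.1 haT'.2 hamin
  -- derive k < b and a < j
  have hjb : j.val < b.val := hbS'.1
  have hak : a.val < k.val := haT'.1
  have hkb : k < b := by
    have hkleb : k.val ≤ b.val := by omega
    have : k ≠ b := fun he => hnadj (he ▸ hbS'.2)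
    exact lt_of_le_of_ne (Fin.le_def.mpr hkleb) this
  have haj : a < j := by
    have hale : a.val ≤ j.val := by omega
    have : a ≠ j := fun he => hnadj (he ▸ haT'.2)
    exact lt_of_le_of_ne (Fin.le_def.mpr hale) (fun he => this (Fin.ext (by omega)))
  exact hnadj (hnj a j k b haj hjk hkb haT'.2 hbS'.2)
end

section
/- In a rooted tree T, let two leaves be 'T3-adjacent' if they are siblings or one's parent is the other's grandparent (one is an uncle of the other, with the uncle being a leaf). If leaves are listed in a DFS order where at each internal node the leaf children are visited before non-leaf children, then for any four leaves u1,u2,u3,u4 in this order, if u1 is T3-adjacent to u3 and u2 is T3-adjacent to u4, then u2 is T3-adjacent to u3. -/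
private lemma iter_d_le {α : Type*} (parent : α → α) (root : α) (d : α → ℕ)
    (hroot : parent root = root) (hd : ∀ x, x ≠ root → d (parent x) < d x) :
    ∀ (t : ℕ) (x : α), d (parent^[t] x) ≤ d x := by
  intro t
  induction t with
  | zero => simp
  | succ m ih =>
    intro x
    rw [Function.iterate_succ_apply']
    rcases eq_or_ne (parent^[m] x) root with h | h
    · rw [h, hroot, ← h]; exact ih x
    · exact (hd _ h).le.trans (ih x)

private lemma iter_d_lt {α : Type*} (parent : α → α) (root : α) (d : α → ℕ)
    (hroot : parent root = root) (hd : ∀ x, x ≠ root → d (parent x) < d x) :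
    ∀ (t : ℕ) (x : α), 1 ≤ t → x ≠ root → d (parent^[t] x) < d x := by
  intro t x ht hx
  obtain ⟨m, rfl⟩ : ∃ m, t = m + 1 := ⟨t - 1, by omega⟩
  rw [Function.iterate_succ_apply]
  exact (iter_d_le parent root d hroot hd m (parent x)).trans_lt (hd x hx)

/-- In a finite rooted tree whose leaves are listed in a DFS order with leaf
children visited before non-leaf children at every internal node, for any four
leaves `v i, v j, v k, v l` in this order (`i < j < k < l`): if `v i` is
T3-adjacent to `v k` and `v j` is T3-adjacent to `v l`, then `v j` is
T3-adjacent to `v k`. -/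
theorem dfsOrder_T3Adj {α : Type*} {n : ℕ}
    (parent : α → α) (root : α) (d : α → ℕ)
    (hroot : parent root = root)
    (hd : ∀ x, x ≠ root → d (parent x) < d x)
    (hrootNonleaf : ∃ y, y ≠ root ∧ parent y = root)
    (v : Fin n → α) (hinj : Function.Injective v)
    (hleaf : ∀ (i : Fin n) (y : α), parent y ≠ v i)
    (hleavesAll : ∀ x : α, (∀ y : α, parent y ≠ x) → ∃ i : Fin n, v i = x)
    (hsubtree : ∀ (x : α) (i j k : Fin n), i ≤ j → j ≤ k →
      (∃ t : ℕ, parent^[t] (v i) = x) → (∃ t : ℕ, parent^[t] (v k) = x) →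
      ∃ t : ℕ, parent^[t] (v j) = x)
    (hleafFirst : ∀ (x : α) (i j : Fin n), parent (v i) = x →
      (∃ t : ℕ, parent^[t] (v j) = x) → parent (v j) ≠ x → i < j)
    :
    ∀ i j k l : Fin n, i < j → j < k → k < l →
      T3Adj parent (v i) (v k) → T3Adj parent (v j) (v l) →
      T3Adj parent (v j) (v k) := by
  intro i j k l hij hjk hkl h13 h24
  obtain ⟨-, h13⟩ := h13
  obtain ⟨-, h24⟩ := h24
  have hiter2 : ∀ x : α, parent^[2] x = parent (parent x) := fun x => rfl
  refine ⟨fun h => absurd (hinj h) hjk.ne, ?_⟩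
  rcases h13 with h | h | h
  · -- parent (v i) = parent (v k) : siblings
    have hbu : ∃ t, parent^[t] (v j) = parent (v i) :=
      hsubtree (parent (v i)) i j k hij.le hjk.le ⟨1, rfl⟩ ⟨1, h.symm⟩
    have hba : parent (v j) = parent (v i) := by
      by_contra hba
      exact absurd (hleafFirst (parent (v i)) k j h.symm hbu hba) hjk.asymm
    exact Or.inl (hba.trans h)
  · -- parent (v i) = parent (parent (v k)) : v i is an uncle of v k
    have hbu : ∃ t, parent^[t] (v j) = parent (v i) :=
      hsubtree (parent (v i)) i j k hij.le hjk.le ⟨1, rfl⟩ ⟨2, by rw [hiter2, ← h]⟩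
    by_cases hba : parent (v j) = parent (v i)
    · exact Or.inr (Or.inl (hba.trans h))
    · -- v j is deeper; analyze using T3-adjacency of v j and v l
      have hca : parent (v k) ≠ parent (v i) := by
        intro hca
        exact absurd (hleafFirst (parent (v i)) k j hca hbu hba) hjk.asymm
      obtain ⟨t, ht⟩ := hbu
      have ht2 : 2 ≤ t := by
        rcases t with _ | t
        · exact absurd ht.symm (hleaf j (v i))
        · rcases t with _ | t
          · exact absurd ht hba
          · omega
      have hbroot : parent (v j) ≠ root := by
        intro hr
        apply hba
        have : parent^[t - 1] (parent (v j)) = parent (v i) := by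
          rw [← Function.iterate_succ_apply, Nat.succ_eq_add_one, show t - 1 + 1 = t by omega]; exact ht
        rw [hr, Function.iterate_fixed hroot] at this
        rw [hr, ← this]
      have hdab : d (parent (v i)) < d (parent (v j)) := by
        have h1 : parent^[t - 1] (parent (v j)) = parent (v i) := by
          rw [← Function.iterate_succ_apply, Nat.succ_eq_add_one, show t - 1 + 1 = t by omega]; exact ht
        rw [← h1]
        exact iter_d_lt parent root d hroot hd (t - 1) (parent (v j)) (by omega) hbroot
      -- general step: if v k is a descendant of a vertex x strictly deeper than
      -- parent (v i), then parent (v k) = x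
      have key : ∀ x : α, d (parent (v i)) < d x → (∀ y, x ≠ v y) →
          (∃ s, parent^[s] (v k) = x) → parent (v k) = x := by
        intro x hdx hxv ⟨s, hs⟩
        rcases s with _ | s
        · exact absurd hs.symm (hxv k)
        · rcases s with _ | s
          · exact hs
          · exfalso
            have : parent^[s] (parent (v i)) = x := by
              have h2 : parent^[s + 2] (v k) = parent^[s] (parent^[2] (v k)) := by
                rw [← Function.iterate_add_apply]
              rw [h2, hiter2, ← h] at hs
              exact hs
            rw [← this] at hdx
            exact absurd (iter_d_le parent root d hroot hd s (parent (v i))) (by omega)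
      rcases h24 with h2 | h2 | h2
      · -- parent (v j) = parent (v l)
        have hcu : ∃ s, parent^[s] (v k) = parent (v j) :=
          hsubtree (parent (v j)) j k l hjk.le hkl.le ⟨1, rfl⟩ ⟨1, h2.symm⟩
        exact Or.inl (key (parent (v j)) hdab (fun y => hleaf y (v j)) hcu).symm
      · -- parent (v j) = parent (parent (v l))
        have hcu : ∃ s, parent^[s] (v k) = parent (v j) :=
          hsubtree (parent (v j)) j k l hjk.le hkl.le ⟨1, rfl⟩ ⟨2, by rw [hiter2, ← h2]⟩
        exact Or.inl (key (parent (v j)) hdab (fun y => hleaf y (v j)) hcu).symm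
      · -- parent (v l) = parent (parent (v j))
        have hcu : ∃ s, parent^[s] (v k) = parent (v l) :=
          hsubtree (parent (v l)) j k l hjk.le hkl.le ⟨2, by rw [hiter2, ← h2]⟩ ⟨1, rfl⟩
        by_cases hea : parent (v l) = parent (v i)
        · -- then v l is a leaf child of parent (v i), must come before v k
          have : l < k := hleafFirst (parent (v i)) l k hea ⟨2, by rw [hiter2, ← h]⟩ hca
          exact absurd this hkl.asymm
        · have ht3 : 3 ≤ t := by
            rcases Nat.lt_or_ge t 3 with h3 | h3
            · exfalso
              have : t = 2 := by omega
              subst this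
              exact hea (by rw [h2, ← hiter2, ht])
            · exact h3
          have heroot : parent (v l) ≠ root := by
            intro hr
            apply hea
            have : parent^[t - 2] (parent (v l)) = parent (v i) := by
              rw [h2, ← hiter2, ← Function.iterate_add_apply,
                show t - 2 + 2 = t by omega]
              exact ht
            rw [hr, Function.iterate_fixed hroot] at this
            rw [hr, ← this]
          have hdae : d (parent (v i)) < d (parent (v l)) := by
            have h1 : parent^[t - 2] (parent (v l)) = parent (v i) := by
              rw [h2, ← hiter2, ← Function.iterate_add_apply,
                show t - 2 + 2 = t by omega]
              exact ht
            rw [← h1]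
            exact iter_d_lt parent root d hroot hd (t - 2) (parent (v l)) (by omega) heroot
          have := key (parent (v l)) hdae (fun y => hleaf y (v l)) hcu
          exact Or.inr (Or.inr (by rw [this, h2]))
  · -- parent (v k) = parent (parent (v i)) : v k is an uncle of v i
    have hbu : ∃ t, parent^[t] (v j) = parent (v k) :=
      hsubtree (parent (v k)) i j k hij.le hjk.le ⟨2, by rw [hiter2, ← h]⟩ ⟨1, rfl⟩
    have hbc : parent (v j) = parent (v k) := by
      by_contra hbc
      exact absurd (hleafFirst (parent (v k)) k j rfl hbu hbc) hjk.asymm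
    exact Or.inl hbc
end

section
/- The class of graphs admitting an L-embedding (with the intersection characterization: for vertices u,v with corners (u.x,u.y),(v.x,v.y), arms rightward of length w and upward of length h, u and v adjacent iff their L-shapes cross) is closed under adding a pendant vertex: if G has an L-embedding and G' is obtained from G by adding a new vertex adjacent to exactly one existing vertex, then G' has an L-embedding. -/
/-- The `L`-shape with corner `(X, Y)`, horizontal arm of length `W` extending
rightward and vertical arm of length `H` extending upward (with the `y`-coordinate
increasing downward, so the vertical arm goes from `(X, Y)` to `(X, Y - H)`). -/
def LShape (X Y W H : ℝ) : Set (ℝ × ℝ) :=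
  {p | (p.2 = Y ∧ X ≤ p.1 ∧ p.1 ≤ X + W) ∨ (p.1 = X ∧ Y - H ≤ p.2 ∧ p.2 ≤ Y)}

/-- A graph admits an `L`-embedding if each vertex can be assigned an `L`-shape so
that two distinct vertices are adjacent iff their `L`-shapes intersect. -/
def HasLEmbedding {V : Type*} (G : SimpleGraph V) : Prop :=
  ∃ X Y W H : V → ℝ, (∀ v, 0 < W v) ∧ (∀ v, 0 < H v) ∧
    ∀ u v : V, u ≠ v →
      (G.Adj u v ↔
        (LShape (X u) (Y u) (W u) (H u) ∩ LShape (X v) (Y v) (W v) (H v)).Nonempty)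

/-!
Whether two `L`-shapes meet depends only on the relative order of their coordinates, so
strictly monotone reparametrisations of the axes preserve an embedding. Open a gap of width 1
at the end of `u₀`'s horizontal arm (the end moves to the far side of the gap) and a gap of
height 1 just below `u₀`'s row. Then split that row: shapes cornered in it at or left of `u₀`'s
corner stay, `u₀` drops by `1/3` and those to its right by `2/3`. The lowered vertical arms still
reach the rows above, so no intersection is lost and none is created. Now the part of `u₀`'s
arm inside the horizontal gap lies on no other shape, and a small pendant `L` hooked onto it
meets `u₀` only.
-/

open Set

/-- An `L`-shape given by its corner `(x, y)`, the `x`-coordinate `right` of the end of its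
horizontal arm and the `y`-coordinate `top` of the end of its vertical arm. -/
structure LShapeData where
  x : ℝ
  y : ℝ
  right : ℝ
  top : ℝ

namespace LShapeData

variable {p q : LShapeData}

def toSet (p : LShapeData) : Set (ℝ × ℝ) := LShape p.x p.y (p.right - p.x) (p.y - p.top)

/-- The horizontal arms overlap, the vertical arms overlap, the horizontal arm of `p` meets the
vertical arm of `q`, or vice versa. -/
def Meets (p q : LShapeData) : Prop :=
  (p.y = q.y ∧ q.x ≤ p.right ∧ p.x ≤ q.right) ∨ (p.x = q.x ∧ q.top ≤ p.y ∧ p.top ≤ q.y) ∨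
    (p.x ≤ q.x ∧ q.x ≤ p.right ∧ q.top ≤ p.y ∧ p.y ≤ q.y) ∨
    (q.x ≤ p.x ∧ p.x ≤ q.right ∧ p.top ≤ q.y ∧ q.y ≤ p.y)

lemma meets_comm : p.Meets q ↔ q.Meets p := by
  simp only [Meets, eq_comm (a := p.y), eq_comm (a := p.x)]
  tauto

lemma mem_toSet {z : ℝ × ℝ} :
    z ∈ p.toSet ↔
      (z.2 = p.y ∧ p.x ≤ z.1 ∧ z.1 ≤ p.right) ∨ (z.1 = p.x ∧ p.top ≤ z.2 ∧ z.2 ≤ p.y) := by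
  simp only [toSet, LShape, mem_ofPred_eq, add_sub_cancel, sub_sub_cancel]

lemma toSet_inter_nonempty_iff (hp : p.x ≤ p.right) (hq : q.x ≤ q.right)
    (hp' : p.top ≤ p.y) (hq' : q.top ≤ q.y) : (p.toSet ∩ q.toSet).Nonempty ↔ p.Meets q := by
  constructor
  · rintro ⟨z, hzp, hzq⟩
    rw [mem_toSet] at hzp hzq
    unfold Meets
    grind
  · rintro (⟨h₁, h₂, h₃⟩ | ⟨h₁, h₂, h₃⟩ | ⟨h₁, h₂, h₃, h₄⟩ | ⟨h₁, h₂, h₃, h₄⟩)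
    · exact ⟨(max p.x q.x, p.y), mem_toSet.2 (by grind), mem_toSet.2 (by grind)⟩
    · exact ⟨(p.x, min p.y q.y), mem_toSet.2 (by grind), mem_toSet.2 (by grind)⟩
    · exact ⟨(q.x, p.y), mem_toSet.2 (by grind), mem_toSet.2 (by grind)⟩
    · exact ⟨(p.x, q.y), mem_toSet.2 (by grind), mem_toSet.2 (by grind)⟩

def map (f g : ℝ → ℝ) (p : LShapeData) : LShapeData := ⟨f p.x, g p.y, f p.right, g p.top⟩

lemma meets_map_iff {f g : ℝ → ℝ} (hf : StrictMono f) (hg : StrictMono g) :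
    (p.map f g).Meets (q.map f g) ↔ p.Meets q := by
  simp only [Meets, map, hf.le_iff_le, hg.le_iff_le, hf.injective.eq_iff, hg.injective.eq_iff]

lemma meets_iff_of_y_lt (h : p.y < q.y) :
    p.Meets q ↔
      (p.x = q.x ∧ q.top ≤ p.y ∧ p.top ≤ q.y) ∨ (p.x ≤ q.x ∧ q.x ≤ p.right ∧ q.top ≤ p.y) := by
  unfold Meets
  grind

lemma meets_iff_of_y_eq (h : p.y = q.y) (hp : p.x ≤ p.right) (hq : q.x ≤ q.right) :
    p.Meets q ↔ q.x ≤ p.right ∧ p.x ≤ q.right := by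
  unfold Meets
  grind

lemma meets_with_y_iff {ι : Type*} {S : ι → LShapeData} {y' : ι → ℝ}
    (hS : ∀ i, (S i).x ≤ (S i).right ∧ (S i).top ≤ (S i).y)
    (htop : ∀ i j, (S j).top ≤ y' i ↔ (S j).top ≤ (S i).y)
    (hlt : ∀ i j, (S i).y < (S j).y → y' i < y' j)
    (htie : ∀ i j, (S i).y = (S j).y → y' i < y' j → (S i).x ≤ (S j).x) (i j : ι) :
    ({ S i with y := y' i } : LShapeData).Meets { S j with y := y' j } ↔ (S i).Meets (S j) := by
  have of_lt : ∀ i j, (S i).y < (S j).y →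
      (({ S i with y := y' i } : LShapeData).Meets { S j with y := y' j } ↔
        (S i).Meets (S j)) := by
    intro i j h
    rw [meets_iff_of_y_lt h, meets_iff_of_y_lt (hlt i j h)]
    simp only [htop]
  have of_y'_lt : ∀ i j, (S i).y = (S j).y → y' i < y' j →
      (({ S i with y := y' i } : LShapeData).Meets { S j with y := y' j } ↔
        (S i).Meets (S j)) := by
    intro i j h h'
    rw [meets_iff_of_y_lt h', meets_iff_of_y_eq h (hS i).1 (hS j).1]
    simp only [htop]
    have := htie i j h h'
    grind
  rcases lt_trichotomy (S i).y (S j).y with h | h | h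
  · exact of_lt i j h
  · rcases lt_trichotomy (y' i) (y' j) with h' | h' | h'
    · exact of_y'_lt i j h h'
    · rw [meets_iff_of_y_eq h (hS i).1 (hS j).1,
        meets_iff_of_y_eq (p := { S i with y := y' i }) (q := { S j with y := y' j }) h'
          (hS i).1 (hS j).1]
    · rw [meets_comm, meets_comm (p := S i)]
      exact of_y'_lt j i h.symm h'
  · rw [meets_comm, meets_comm (p := S i)]
    exact of_lt j i h

end LShapeData

open LShapeData

lemma hasLEmbedding_iff {V : Type*} {G : SimpleGraph V} :
    HasLEmbedding G ↔ ∃ S : V → LShapeData,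
      (∀ v, (S v).x < (S v).right ∧ (S v).top < (S v).y) ∧
        ∀ u v, u ≠ v → (G.Adj u v ↔ (S u).Meets (S v)) := by
  constructor
  · rintro ⟨X, Y, W, H, hW, hH, hadj⟩
    refine ⟨fun v ↦ ⟨X v, Y v, X v + W v, Y v - H v⟩,
      fun v ↦ ⟨by linarith [hW v], by linarith [hH v]⟩, fun u v huv ↦ ?_⟩
    rw [hadj u v huv, ← toSet_inter_nonempty_iff (by linarith [hW u]) (by linarith [hW v])
      (by linarith [hH u]) (by linarith [hH v])]
    simp only [toSet, add_sub_cancel_left, sub_sub_cancel]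
  · rintro ⟨S, hS, hadj⟩
    refine ⟨fun v ↦ (S v).x, fun v ↦ (S v).y, fun v ↦ (S v).right - (S v).x,
      fun v ↦ (S v).y - (S v).top, fun v ↦ sub_pos.2 (hS v).1, fun v ↦ sub_pos.2 (hS v).2,
      fun u v huv ↦ ?_⟩
    rw [hadj u v huv, ← toSet_inter_nonempty_iff (hS u).1.le (hS v).1.le (hS u).2.le (hS v).2.le]
    rfl

noncomputable def shiftAbove (U : Set ℝ) (z : ℝ) : ℝ := z + U.indicator 1 z

section shiftAbove

variable {U : Set ℝ} {z : ℝ}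

lemma shiftAbove_of_mem (h : z ∈ U) : shiftAbove U z = z + 1 := by
  simp [shiftAbove, h]

lemma shiftAbove_of_notMem (h : z ∉ U) : shiftAbove U z = z := by
  simp [shiftAbove, h]

lemma strictMono_shiftAbove (hU : IsUpperSet U) : StrictMono (shiftAbove U) := by
  intro a b hab
  by_cases ha : a ∈ U
  · rw [shiftAbove_of_mem ha, shiftAbove_of_mem (hU hab.le ha)]
    linarith
  · rw [shiftAbove_of_notMem ha, shiftAbove]
    have : (0 : ℝ) ≤ U.indicator 1 b := indicator_nonneg (fun _ _ ↦ zero_le_one) b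
    linarith

end shiftAbove

section isolate

variable {ι : Type*} (S : ι → LShapeData) (i₀ : ι)

open Classical in
noncomputable def rowOffset (i : ι) : ℝ :=
  if (S i).y ≠ (S i₀).y then 0
  else if i = i₀ then 1/3 else if (S i).x ≤ (S i₀).x then 0 else 2/3

noncomputable def isolate (i : ι) : LShapeData :=
  { (S i).map (shiftAbove (Ici (S i₀).right)) (shiftAbove (Ioi (S i₀).y)) with
    y := shiftAbove (Ioi (S i₀).y) (S i).y + rowOffset S i₀ i }

noncomputable def pendant : LShapeData :=
  ⟨(S i₀).right + 1/2, (S i₀).y + 1/3, (S i₀).right + 3/4, (S i₀).y + 1/6⟩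

variable {S i₀}

lemma rowOffset_nonneg (i : ι) : 0 ≤ rowOffset S i₀ i := by
  unfold rowOffset; split_ifs <;> norm_num

lemma rowOffset_lt_one (i : ι) : rowOffset S i₀ i < 1 := by
  unfold rowOffset; split_ifs <;> norm_num

lemma rowOffset_of_ne {i : ι} (h : (S i).y ≠ (S i₀).y) : rowOffset S i₀ i = 0 := if_pos h

lemma shiftAbove_le_add_rowOffset_iff {z : ℝ} {i : ι} :
    shiftAbove (Ioi (S i₀).y) z ≤ shiftAbove (Ioi (S i₀).y) (S i).y + rowOffset S i₀ i ↔
      shiftAbove (Ioi (S i₀).y) z ≤ shiftAbove (Ioi (S i₀).y) (S i).y := by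
  refine ⟨fun h ↦ ?_, fun h ↦ by linarith [rowOffset_nonneg (S := S) (i₀ := i₀) i]⟩
  by_cases hi : (S i).y = (S i₀).y
  · have hz : z ≤ (S i₀).y := by
      by_contra! hz
      rw [hi, shiftAbove_of_mem (mem_Ioi.2 hz), shiftAbove_of_notMem (notMem_Ioi.2 le_rfl)] at h
      linarith [rowOffset_lt_one (S := S) (i₀ := i₀) i]
    rwa [hi, shiftAbove_of_notMem (notMem_Ioi.2 le_rfl), shiftAbove_of_notMem (notMem_Ioi.2 hz)]
  · rwa [rowOffset_of_ne hi, add_zero] at h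

lemma add_rowOffset_lt_add_rowOffset {i j : ι} (h : (S i).y < (S j).y) :
    shiftAbove (Ioi (S i₀).y) (S i).y + rowOffset S i₀ i <
      shiftAbove (Ioi (S i₀).y) (S j).y + rowOffset S i₀ j := by
  have hj := rowOffset_nonneg (S := S) (i₀ := i₀) j
  by_cases hi : (S i).y = (S i₀).y
  · rw [hi, shiftAbove_of_notMem (notMem_Ioi.2 le_rfl), shiftAbove_of_mem (mem_Ioi.2 (hi ▸ h))]
    linarith [rowOffset_lt_one (S := S) (i₀ := i₀) i]
  · rw [rowOffset_of_ne hi]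
    linarith [strictMono_shiftAbove (isUpperSet_Ioi (S i₀).y) h]

lemma x_le_of_rowOffset_lt {i j : ι} (h : (S i).y = (S j).y)
    (h' : rowOffset S i₀ i < rowOffset S i₀ j) : (S i).x ≤ (S j).x := by
  unfold rowOffset at h'
  split_ifs at h' <;> grind

lemma eq_of_add_rowOffset_mem_Icc {i : ι}
    (h : shiftAbove (Ioi (S i₀).y) (S i).y + rowOffset S i₀ i ∈
      Icc ((S i₀).y + 1/6) ((S i₀).y + 1/3)) : i = i₀ := by
  rcases lt_trichotomy (S i).y (S i₀).y with hi | hi | hi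
  · rw [rowOffset_of_ne hi.ne, shiftAbove_of_notMem (notMem_Ioi.2 hi.le)] at h
    linarith [h.1]
  · unfold rowOffset at h
    rw [hi, shiftAbove_of_notMem (notMem_Ioi.2 le_rfl)] at h
    split_ifs at h <;> first | assumption | norm_num at h
  · rw [rowOffset_of_ne hi.ne', shiftAbove_of_mem (mem_Ioi.2 hi)] at h
    linarith [h.2]

lemma isolate_proper (hS : ∀ i, (S i).x < (S i).right ∧ (S i).top < (S i).y) (i : ι) :
    (isolate S i₀ i).x < (isolate S i₀ i).right ∧ (isolate S i₀ i).top < (isolate S i₀ i).y :=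
  ⟨strictMono_shiftAbove (isUpperSet_Ici _) (hS i).1,
    lt_add_of_lt_of_nonneg (strictMono_shiftAbove (isUpperSet_Ioi _) (hS i).2)
      (rowOffset_nonneg i)⟩

lemma meets_isolate_iff (hS : ∀ i, (S i).x ≤ (S i).right ∧ (S i).top ≤ (S i).y) (i j : ι) :
    (isolate S i₀ i).Meets (isolate S i₀ j) ↔ (S i).Meets (S j) := by
  have hf := strictMono_shiftAbove (isUpperSet_Ici (S i₀).right)
  have hg := strictMono_shiftAbove (isUpperSet_Ioi (S i₀).y)
  refine .trans ?_ (meets_map_iff hf hg)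
  refine meets_with_y_iff
    (S := fun i ↦ (S i).map (shiftAbove (Ici (S i₀).right)) (shiftAbove (Ioi (S i₀).y)))
    (y' := fun i ↦ shiftAbove (Ioi (S i₀).y) (S i).y + rowOffset S i₀ i)
    (fun i ↦ ⟨hf.monotone (hS i).1, hg.monotone (hS i).2⟩)
    (fun _ _ ↦ shiftAbove_le_add_rowOffset_iff) (fun i j h ↦ ?_) (fun i j h h' ↦ ?_) i j
  · exact add_rowOffset_lt_add_rowOffset (hg.lt_iff_lt.1 h)
  · have h := hg.injective h
    exact hf.monotone (x_le_of_rowOffset_lt h (by simpa [map, h] using h'))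

lemma isolate_meets_pendant_iff (h₀ : (S i₀).x < (S i₀).right) (i : ι) :
    (isolate S i₀ i).Meets (pendant S i₀) ↔ i = i₀ := by
  have gap : ∀ z, shiftAbove (Ici (S i₀).right) z < (S i₀).right ∨
      (S i₀).right + 1 ≤ shiftAbove (Ici (S i₀).right) z := by
    intro z
    by_cases hz : (S i₀).right ≤ z
    · rw [shiftAbove_of_mem (mem_Ici.2 hz)]; right; linarith
    · rw [shiftAbove_of_notMem (notMem_Ici.2 (not_le.1 hz))]; left; linarith
  have row := eq_of_add_rowOffset_mem_Icc (S := S) (i₀ := i₀) (i := i)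
  simp only [Meets, isolate, pendant, map, mem_Icc] at row ⊢
  constructor
  · rintro (⟨h₁, -⟩ | ⟨h₁, -⟩ | ⟨-, -, h₁, h₂⟩ | ⟨h₁, h₂, -⟩)
    · exact row ⟨by linarith, by linarith⟩
    · rcases gap (S i).x with h | h <;> linarith
    · exact row ⟨h₁, h₂⟩
    · rcases gap (S i).x with h | h <;> linarith
  · rintro rfl
    rw [shiftAbove_of_notMem (notMem_Ici.2 h₀), shiftAbove_of_mem (mem_Ici.2 le_rfl),
      shiftAbove_of_notMem (notMem_Ioi.2 le_rfl)]
    simp only [rowOffset, ne_eq, not_true_eq_false, if_false, if_true]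
    exact Or.inr (Or.inr (Or.inl ⟨by linarith, by linarith, by linarith, le_rfl⟩))

end isolate

lemma hasLEmbedding_of_pendant {V : Type*} {G : SimpleGraph V} {G' : SimpleGraph (Option V)}
    {u₀ : V} (hsame : ∀ a b : V, G'.Adj (some a) (some b) ↔ G.Adj a b)
    (hpend : ∀ a : V, G'.Adj (some a) none ↔ a = u₀) {S : V → LShapeData}
    (hS : ∀ v, (S v).x < (S v).right ∧ (S v).top < (S v).y)
    (hadj : ∀ u v, u ≠ v → (G.Adj u v ↔ (S u).Meets (S v))) {p : LShapeData}
    (hp : p.x < p.right ∧ p.top < p.y) (hpS : ∀ v, (S v).Meets p ↔ v = u₀) :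
    HasLEmbedding G' := by
  refine hasLEmbedding_iff.2 ⟨fun o ↦ o.elim p S, fun o ↦ o.rec hp hS, ?_⟩
  rintro (_ | u) (_ | v) huv
  · exact absurd rfl huv
  · rw [G'.adj_comm, hpend, meets_comm]
    exact (hpS v).symm
  · rw [hpend]
    exact (hpS u).symm
  · rw [hsame]
    exact hadj u v (ne_of_apply_ne some huv)

/-- The class of `L`-graphs is closed under adding a pendant vertex: if `G` has
an `L`-embedding and `G'` is obtained from `G` by adding a new vertex adjacent
to exactly one existing vertex `u₀`, then `G'` has an `L`-embedding. -/
theorem hasLEmbedding_addPendant {V : Type*} (G : SimpleGraph V)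
    (hG : HasLEmbedding G) (u₀ : V) (G' : SimpleGraph (Option V))
    (hsame : ∀ a b : V, G'.Adj (some a) (some b) ↔ G.Adj a b)
    (hpend : ∀ a : V, G'.Adj (some a) none ↔ a = u₀) :
    HasLEmbedding G' := by
  obtain ⟨S, hS, hadj⟩ := hasLEmbedding_iff.1 hG
  have hS' : ∀ v, (S v).x ≤ (S v).right ∧ (S v).top ≤ (S v).y :=
    fun v ↦ ⟨(hS v).1.le, (hS v).2.le⟩
  exact hasLEmbedding_of_pendant hsame hpend (isolate_proper hS)
    (fun u v huv ↦ (hadj u v huv).trans (meets_isolate_iff hS' u v).symm)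
    ⟨by norm_num [pendant], by norm_num [pendant]⟩ (isolate_meets_pendant_iff (hS u₀).1)
end

section
/- Every graph admitting a monotone L-embedding is an L-graph, but the converse fails: there exists a graph admitting an L-embedding that admits no non-jumping labeling (hence no monotone L-embedding). -/
/-! Put the corners of a monotone L-embedding on the diagonal: for `a < b` the L-shapes of `σ a`
and `σ b` then meet exactly when the horizontal arm of the first reaches the vertical arm of the
second, which is the monotone adjacency condition once its strict inequalities are traded for
closed ones (possible because only finitely many distances occur).

The octahedron `K_{2,2,2}` has an explicit L-embedding. In any labeling some non-adjacent pair
`{a, b}` avoids the parts of the first and the last vertex; both `a` and `b` are then adjacent to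
these two vertices, so the non-jumping condition would force the edge `ab`. -/

open Filter Topology

theorem eventually_nhdsLT_forall_lt_iff_le {ι α : Type*} [Finite ι] [LinearOrder α]
    [TopologicalSpace α] [OrderTopology α] (f : ι → α) (w : α) :
    ∀ᶠ w' in 𝓝[<] w, ∀ i, f i < w ↔ f i ≤ w' := by
  rw [eventually_all]
  intro i
  by_cases hi : f i < w
  · filter_upwards [Ioo_mem_nhdsLT hi] with w' hw'
    exact ⟨fun _ => hw'.1.le, fun _ => hi⟩
  · filter_upwards [self_mem_nhdsWithin] with w' (hw' : w' < w)
    exact ⟨fun h => absurd h hi, fun h => absurd (h.trans_lt hw') hi⟩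

theorem exists_pos_forall_lt_iff_le {ι : Type*} [Finite ι] (f : ι → ℝ) {w : ℝ} (hw : 0 < w) :
    ∃ w', 0 < w' ∧ ∀ i, f i < w ↔ f i ≤ w' :=
  ((eventually_nhdsLT_forall_lt_iff_le f w).and (Ioo_mem_nhdsLT hw)).exists.imp
    fun _ h => ⟨h.2.1, h.1⟩

-- Overlapping horizontal arms, overlapping vertical arms, or an arm of one crossing the other's.
def LShapesMeet {α : Type*} [Add α] [Sub α] [LE α] (X₁ Y₁ W₁ H₁ X₂ Y₂ W₂ H₂ : α) : Prop :=
  (Y₁ = Y₂ ∧ X₁ ≤ X₂ + W₂ ∧ X₂ ≤ X₁ + W₁) ∨ (X₁ = X₂ ∧ Y₁ - H₁ ≤ Y₂ ∧ Y₂ - H₂ ≤ Y₁) ∨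
    (X₁ ≤ X₂ ∧ X₂ ≤ X₁ + W₁ ∧ Y₂ - H₂ ≤ Y₁ ∧ Y₁ ≤ Y₂) ∨
    (X₂ ≤ X₁ ∧ X₁ ≤ X₂ + W₂ ∧ Y₁ - H₁ ≤ Y₂ ∧ Y₂ ≤ Y₁)

instance {α : Type*} [Add α] [Sub α] [LE α] [DecidableEq α] [DecidableLE α]
    (X₁ Y₁ W₁ H₁ X₂ Y₂ W₂ H₂ : α) : Decidable (LShapesMeet X₁ Y₁ W₁ H₁ X₂ Y₂ W₂ H₂) :=
  inferInstanceAs (Decidable (_ ∨ _ ∨ _ ∨ _))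

theorem lShapesMeet_intCast (X₁ Y₁ W₁ H₁ X₂ Y₂ W₂ H₂ : ℤ) :
    LShapesMeet (X₁ : ℝ) Y₁ W₁ H₁ X₂ Y₂ W₂ H₂ ↔ LShapesMeet X₁ Y₁ W₁ H₁ X₂ Y₂ W₂ H₂ := by
  simp only [LShapesMeet]
  norm_cast

theorem lShape_inter_nonempty_iff {X₁ Y₁ W₁ H₁ X₂ Y₂ W₂ H₂ : ℝ} (hW₁ : 0 ≤ W₁) (hH₁ : 0 ≤ H₁)
    (hW₂ : 0 ≤ W₂) (hH₂ : 0 ≤ H₂) :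
    (LShape X₁ Y₁ W₁ H₁ ∩ LShape X₂ Y₂ W₂ H₂).Nonempty ↔
      LShapesMeet X₁ Y₁ W₁ H₁ X₂ Y₂ W₂ H₂ := by
  constructor
  · rintro ⟨⟨x, y⟩, ⟨rfl, a₁, b₁⟩ | ⟨rfl, a₁, b₁⟩, ⟨e₂, a₂, b₂⟩ | ⟨e₂, a₂, b₂⟩⟩
    all_goals dsimp only at *
    all_goals subst e₂
    · exact Or.inl ⟨rfl, by linarith, by linarith⟩
    · exact Or.inr <| Or.inr <| Or.inl ⟨a₁, b₁, a₂, b₂⟩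
    · exact Or.inr <| Or.inr <| Or.inr ⟨a₂, b₂, a₁, b₁⟩
    · exact Or.inr <| Or.inl ⟨rfl, by linarith, by linarith⟩
  · rintro (⟨rfl, h₁, h₂⟩ | ⟨rfl, h₁, h₂⟩ | ⟨h₁, h₂, h₃, h₄⟩ | ⟨h₁, h₂, h₃, h₄⟩)
    · exact ⟨(max X₁ X₂, Y₁), Or.inl ⟨rfl, le_max_left _ _, max_le (by linarith) h₂⟩,
        Or.inl ⟨rfl, le_max_right _ _, max_le h₁ (by linarith)⟩⟩
    · exact ⟨(X₁, min Y₁ Y₂), Or.inr ⟨rfl, le_min (by linarith) h₁, min_le_left _ _⟩,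
        Or.inr ⟨rfl, le_min h₂ (by linarith), min_le_right _ _⟩⟩
    · exact ⟨(X₂, Y₁), Or.inl ⟨rfl, h₁, h₂⟩, Or.inr ⟨rfl, h₃, h₄⟩⟩
    · exact ⟨(X₁, Y₂), Or.inr ⟨rfl, h₃, h₄⟩, Or.inl ⟨rfl, h₁, h₂⟩⟩

theorem lShape_diag_inter_nonempty_iff {p q W₁ H₁ W₂ H₂ : ℝ} (hpq : p < q) (hW₁ : 0 ≤ W₁)
    (hH₁ : 0 ≤ H₁) (hW₂ : 0 ≤ W₂) (hH₂ : 0 ≤ H₂) :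
    (LShape p p W₁ H₁ ∩ LShape q q W₂ H₂).Nonempty ↔ q - p ≤ W₁ ∧ q - p ≤ H₂ := by
  rw [lShape_inter_nonempty_iff hW₁ hH₁ hW₂ hH₂]
  constructor
  · rintro (⟨h, -⟩ | ⟨h, -⟩ | ⟨-, h₁, h₂, -⟩ | ⟨h, -⟩)
    · exact absurd h hpq.ne
    · exact absurd h hpq.ne
    · constructor <;> linarith
    · exact absurd h hpq.not_ge
  · rintro ⟨h₁, h₂⟩
    exact Or.inr <| Or.inr <| Or.inl ⟨hpq.le, by linarith, by linarith, hpq.le⟩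

theorem HasMonotoneLEmbedding.hasLEmbedding {n : ℕ} {G : SimpleGraph (Fin n)}
    (hG : HasMonotoneLEmbedding G) : HasLEmbedding G := by
  obtain ⟨σ, x, w, h, hx, hw, hh, hadj⟩ := hG
  choose W hW₀ hW using fun a => exists_pos_forall_lt_iff_le (fun b => x b - x a) (hw a)
  choose H hH₀ hH using fun b => exists_pos_forall_lt_iff_le (fun a => x b - x a) (hh b)
  have key : ∀ a b, a < b → (G.Adj (σ a) (σ b) ↔
      (LShape (x a) (x a) (W a) (H a) ∩ LShape (x b) (x b) (W b) (H b)).Nonempty) := by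
    intro a b hab
    rw [hadj a b hab, lShape_diag_inter_nonempty_iff (hx hab) (hW₀ a).le (hH₀ a).le (hW₀ b).le
      (hH₀ b).le, hW, hH]
  refine ⟨x ∘ σ.symm, x ∘ σ.symm, W ∘ σ.symm, H ∘ σ.symm, fun _ => hW₀ _, fun _ => hH₀ _, ?_⟩
  intro u v huv
  obtain ⟨a, rfl⟩ := σ.surjective u
  obtain ⟨b, rfl⟩ := σ.surjective v
  simp only [Function.comp_apply, Equiv.symm_apply_apply]
  rcases (σ.injective.ne_iff.mp huv).lt_or_gt with hab | hab
  · exact key a b hab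
  · rw [G.adj_comm, Set.inter_comm]
    exact key b a hab

theorem NonJumping.adj_of_adj_first_last {V : Type*} {G : SimpleGraph V} {m : ℕ}
    {σ : Fin (m + 1) ≃ V} (hσ : NonJumping G σ) {a b : V} (hab : a ≠ b)
    (ha₀ : G.Adj (σ 0) a) (hb₀ : G.Adj (σ 0) b)
    (haₗ : G.Adj a (σ (Fin.last m))) (hbₗ : G.Adj b (σ (Fin.last m))) : G.Adj a b := by
  wlog hlt : σ.symm a < σ.symm b generalizing a b
  · exact (this hab.symm hb₀ ha₀ hbₗ haₗ <|
      (not_lt.mp hlt).lt_of_ne (σ.symm.injective.ne hab.symm)).symm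
  have hpos : 0 < σ.symm a := by
    rw [Fin.pos_iff_ne_zero, Ne, Equiv.symm_apply_eq]
    exact fun h => ha₀.ne h.symm
  have hlast : σ.symm b < Fin.last m := by
    rw [Fin.lt_last_iff_ne_last, Ne, Equiv.symm_apply_eq]
    exact fun h => hbₗ.ne h
  simpa using hσ 0 _ _ _ hpos hlt hlast (by simpa using hb₀) (by simpa using haₗ)

def octahedron : SimpleGraph (Fin 6) where
  Adj u v := u.val / 2 ≠ v.val / 2
  symm := ⟨fun _ _ h => h.symm⟩
  loopless := ⟨fun _ h => h rfl⟩

instance : DecidableRel octahedron.Adj := fun u v =>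
  inferInstanceAs (Decidable (u.val / 2 ≠ v.val / 2))

theorem octahedron_exists_nonadj_common_neighbors (u w : Fin 6) :
    ∃ a b, a ≠ b ∧ ¬ octahedron.Adj a b ∧ octahedron.Adj u a ∧ octahedron.Adj u b ∧
      octahedron.Adj a w ∧ octahedron.Adj b w := by
  revert u w
  decide

def octahedronX : Fin 6 → ℤ := ![4, 3, 7, 8, 7, 6]
def octahedronY : Fin 6 → ℤ := ![1, 2, 6, 5, 2, 3]
def octahedronW : Fin 6 → ℤ := ![5, 6, 6, 5, 7, 6]
def octahedronH : Fin 6 → ℤ := ![1, 7, 7, 6, 7, 2]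

theorem octahedron_adj_iff_lShapesMeet :
    ∀ u v : Fin 6, u ≠ v → (octahedron.Adj u v ↔
      LShapesMeet (octahedronX u) (octahedronY u) (octahedronW u) (octahedronH u)
        (octahedronX v) (octahedronY v) (octahedronW v) (octahedronH v)) := by
  decide

theorem octahedron_hasLEmbedding : HasLEmbedding octahedron := by
  have hW : ∀ v, (0 : ℝ) < octahedronW v := fun v => Int.cast_pos.mpr (by revert v; decide)
  have hH : ∀ v, (0 : ℝ) < octahedronH v := fun v => Int.cast_pos.mpr (by revert v; decide)
  refine ⟨fun v => octahedronX v, fun v => octahedronY v, fun v => octahedronW v,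
    fun v => octahedronH v, hW, hH, fun u v huv => ?_⟩
  rw [lShape_inter_nonempty_iff (hW u).le (hH u).le (hW v).le (hH v).le, lShapesMeet_intCast]
  exact octahedron_adj_iff_lShapesMeet u v huv

/-- Every graph admitting a monotone `L`-embedding is an `L`-graph, but not
conversely: there is an `L`-graph with no non-jumping labeling (hence no
monotone `L`-embedding). -/
theorem monotone_L_subset_L_strict :
    (∀ (n : ℕ) (G : SimpleGraph (Fin n)), HasMonotoneLEmbedding G → HasLEmbedding G) ∧
    ∃ (n : ℕ) (G : SimpleGraph (Fin n)), HasLEmbedding G ∧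
      ∀ σ : Equiv.Perm (Fin n), ¬ NonJumping G σ := by
  refine ⟨fun _ _ => HasMonotoneLEmbedding.hasLEmbedding,
    6, octahedron, octahedron_hasLEmbedding, fun σ hσ => ?_⟩
  obtain ⟨a, b, hab, hnadj, ha₀, hb₀, haₗ, hbₗ⟩ :=
    octahedron_exists_nonadj_common_neighbors (σ 0) (σ (Fin.last 5))
  exact hnadj (hσ.adj_of_adj_first_last hab ha₀ hb₀ haₗ hbₗ)
end
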